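/- Let k > 0, ν > 0, and c ∈ ℝ. Then for all x > 0, x · d/dx W^k_{ν,c}(x) = (x/k) W^k_{ν−k,c}(x) − (ν/k) W^k_{ν,c}(x). -/

import Mathlib

/-!
Write `W^k_{ν,c}(x) = ∑ a_r(ν) (x/2)^(2r + ν/k)` with `a_r(ν) = kBesselCoeff k ν c r`. The recurrence `Γ_k(s + k) = s Γ_k(s)` gives
`a_r(ν - k) = (rk + ν) a_r(ν)`, so the identity holds term by term: both sides of the `r`-th term
equal `(2r + ν/k) a_r(ν) (x/2)^(2r + ν/k)`. Differentiating term by term is justified on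
`(x/2, 2x)` by `|a_r(ν)| ≤ (|c|/k)^r / (r! Γ_k(ν + k))`, which dominates the differentiated series
by an exponential series.
-/

open Real

/-- The k-gamma function, `Γ_k(x) = k^(x/k - 1) * Γ(x/k)`. -/
noncomputable def kGamma (k x : ℝ) : ℝ := k ^ (x / k - 1) * Real.Gamma (x / k)

/-- The generalized k-Bessel function `W^k_{ν,c}(x)`. -/
noncomputable def kBesselW (k ν c x : ℝ) : ℝ :=
  ∑' r : ℕ, (-c) ^ r / (kGamma k (r * k + ν + k) * (r.factorial : ℝ)) *
    (x / 2) ^ (2 * (r : ℝ) + ν / k)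

open Nat

lemma kGamma_pos {k x : ℝ} (hk : 0 < k) (hx : 0 < x) : 0 < kGamma k x :=
  mul_pos (rpow_pos_of_pos hk _) (Gamma_pos_of_pos (div_pos hx hk))

lemma kGamma_add_k {k x : ℝ} (hk : k ≠ 0) (hx : x ≠ 0) :
    kGamma k (x + k) = x * kGamma k x := by
  rw [kGamma, kGamma, add_div, div_self hk, add_sub_cancel_right, Gamma_add_one (div_ne_zero hx hk),
    rpow_sub_one hk]
  field_simp

lemma pow_mul_kGamma_le {k ν : ℝ} (hk : 0 < k) (hν : 0 ≤ ν) (r : ℕ) :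
    k ^ r * kGamma k (ν + k) ≤ kGamma k (r * k + ν + k) := by
  induction r with
  | zero => simp
  | succ r ih =>
    have hpos : 0 < r * k + ν + k := by positivity
    calc k ^ (r + 1) * kGamma k (ν + k) = k * (k ^ r * kGamma k (ν + k)) := by ring
      _ ≤ (r * k + ν + k) * kGamma k (r * k + ν + k) := by
        have hΓ := kGamma_pos hk (by positivity : 0 < ν + k)
        gcongr
        nlinarith
      _ = kGamma k ((r + 1 : ℕ) * k + ν + k) := by
        rw [← kGamma_add_k hk.ne' hpos.ne']; push_cast; ring_nf

noncomputable def kBesselCoeff (k ν c : ℝ) (r : ℕ) : ℝ :=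
  (-c) ^ r / (kGamma k (r * k + ν + k) * (r.factorial : ℝ))

noncomputable def kBesselTerm (k ν c : ℝ) (r : ℕ) (x : ℝ) : ℝ :=
  kBesselCoeff k ν c r * (x / 2) ^ (2 * (r : ℝ) + ν / k)

lemma kBesselW_eq_tsum (k ν c x : ℝ) : kBesselW k ν c x = ∑' r, kBesselTerm k ν c r x := rfl

lemma abs_kBesselCoeff_le {k ν : ℝ} (c : ℝ) (hk : 0 < k) (hν : 0 ≤ ν) (r : ℕ) :
    |kBesselCoeff k ν c r| ≤ (|c| / k) ^ r / r ! / kGamma k (ν + k) := by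
  have hΓ := kGamma_pos hk (by positivity : 0 < ν + k)
  calc |kBesselCoeff k ν c r| = |c| ^ r / (kGamma k (r * k + ν + k) * r !) := by
        rw [kBesselCoeff, abs_div, abs_pow, abs_neg,
          abs_of_pos (mul_pos (kGamma_pos hk (by positivity)) (by positivity))]
    _ ≤ |c| ^ r / (k ^ r * kGamma k (ν + k) * r !) := by
        refine div_le_div_of_nonneg_left (by positivity) (by positivity) ?_
        exact mul_le_mul_of_nonneg_right (pow_mul_kGamma_le hk hν r) (by positivity)
    _ = (|c| / k) ^ r / r ! / kGamma k (ν + k) := by rw [div_pow]; field_simp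

lemma kBesselCoeff_sub_k {k ν : ℝ} (c : ℝ) (hk : k ≠ 0) {r : ℕ} (h : r * k + ν ≠ 0) :
    kBesselCoeff k (ν - k) c r = (r * k + ν) * kBesselCoeff k ν c r := by
  rw [kBesselCoeff, kBesselCoeff, add_sub_assoc', sub_add_cancel, kGamma_add_k hk h]
  field_simp

lemma half_mul_kBesselTerm_sub_k {k ν : ℝ} (c : ℝ) (hk : k ≠ 0) {r : ℕ} (h : r * k + ν ≠ 0)
    {x : ℝ} (hx : x ≠ 0) :
    x / 2 * kBesselTerm k (ν - k) c r x = (r * k + ν) * kBesselTerm k ν c r x := by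
  have hexp : 2 * (r : ℝ) + (ν - k) / k = 2 * r + ν / k - 1 := by field_simp; ring
  rw [kBesselTerm, kBesselTerm, hexp, rpow_sub_one (div_ne_zero hx two_ne_zero),
    kBesselCoeff_sub_k c hk h]
  field_simp

lemma summable_succ_mul_abs_kBesselTerm {k ν : ℝ} (c : ℝ) (hk : 0 < k) (hν : 0 ≤ ν) {y : ℝ}
    (hy : 0 < y) : Summable (fun r : ℕ ↦ (r + 1) * |kBesselTerm k ν c r y|) := by
  set z := y / 2
  have hz : 0 < z := by positivity
  have hΓ := kGamma_pos hk (by positivity : 0 < ν + k)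
  refine .of_nonneg_of_le (fun r ↦ by positivity) (fun r ↦ ?_)
    ((summable_pow_div_factorial (2 * |c| / k * z ^ 2)).mul_left (z ^ (ν / k) / kGamma k (ν + k)))
  have h2 : (r : ℝ) + 1 ≤ 2 ^ r := by exact_mod_cast Nat.lt_two_pow_self
  calc (r + 1) * |kBesselTerm k ν c r y|
      = (r + 1) * |kBesselCoeff k ν c r| * (z ^ (ν / k) * (z ^ 2) ^ r) := by
        rw [kBesselTerm, abs_mul, abs_of_nonneg (rpow_nonneg hz.le _), rpow_add hz,
          rpow_mul_natCast hz.le, rpow_two]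
        ring
    _ ≤ 2 ^ r * ((|c| / k) ^ r / r ! / kGamma k (ν + k)) * (z ^ (ν / k) * (z ^ 2) ^ r) := by
        gcongr
        exact abs_kBesselCoeff_le c hk hν r
    _ = z ^ (ν / k) / kGamma k (ν + k) * ((2 * |c| / k * z ^ 2) ^ r / r !) := by
        simp only [mul_pow, div_pow]
        ring

lemma abs_kBesselTerm_le_of_le {k ν : ℝ} (c : ℝ) (hk : 0 < k) (hν : 0 ≤ ν) (r : ℕ) {y b : ℝ}
    (hy : 0 ≤ y) (hyb : y ≤ b) : |kBesselTerm k ν c r y| ≤ |kBesselTerm k ν c r b| := by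
  rw [kBesselTerm, kBesselTerm, abs_mul, abs_mul,
    abs_of_nonneg (rpow_nonneg (by positivity) _), abs_of_nonneg (rpow_nonneg (by linarith) _)]
  gcongr

lemma abs_kBesselTerm_deriv_le {k ν : ℝ} (c : ℝ) (hk : 0 < k) (hν : 0 ≤ ν) (r : ℕ)
    {a y b : ℝ} (ha : 0 < a) (hay : a ≤ y) (hyb : y ≤ b) :
    |(2 * r + ν / k) / y * kBesselTerm k ν c r y| ≤
      (2 + ν / k) / a * ((r + 1) * |kBesselTerm k ν c r b|) := by
  have hy : 0 < y := ha.trans_le hay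
  have hr : 2 * (r : ℝ) + ν / k ≤ (2 + ν / k) * (r + 1) := by
    have : 0 ≤ ν / k * r := by positivity
    nlinarith
  calc |(2 * r + ν / k) / y * kBesselTerm k ν c r y|
      = (2 * r + ν / k) / y * |kBesselTerm k ν c r y| := by
        rw [abs_mul, abs_of_nonneg (by positivity)]
    _ ≤ (2 + ν / k) * (r + 1) / a * |kBesselTerm k ν c r b| := by
        gcongr ?_ / ?_ * ?_
        exact abs_kBesselTerm_le_of_le c hk hν r hy.le hyb
    _ = (2 + ν / k) / a * ((r + 1) * |kBesselTerm k ν c r b|) := by ring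

lemma hasDerivAt_kBesselTerm (k ν c : ℝ) (r : ℕ) {y : ℝ} (hy : y ≠ 0) :
    HasDerivAt (kBesselTerm k ν c r) ((2 * r + ν / k) / y * kBesselTerm k ν c r y) y := by
  have hy2 : y / 2 ≠ 0 := div_ne_zero hy two_ne_zero
  have h := ((hasDerivAt_rpow_const (p := 2 * r + ν / k) (Or.inl hy2)).comp y
    ((hasDerivAt_id y).div_const 2)).const_mul (kBesselCoeff k ν c r)
  refine h.congr_deriv ?_
  rw [kBesselTerm, rpow_sub_one hy2]
  field_simp

lemma summable_kBesselTerm {k ν : ℝ} (c : ℝ) (hk : 0 < k) (hν : 0 ≤ ν) {y : ℝ} (hy : 0 < y) :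
    Summable (fun r : ℕ ↦ kBesselTerm k ν c r y) :=
  .of_norm_bounded (summable_succ_mul_abs_kBesselTerm c hk hν hy) fun r ↦
    le_mul_of_one_le_left (abs_nonneg _) (by simp)

lemma hasDerivAt_kBesselW_tsum {k ν : ℝ} (c : ℝ) (hk : 0 < k) (hν : 0 ≤ ν) {x : ℝ} (hx : 0 < x) :
    HasDerivAt (kBesselW k ν c) (∑' r : ℕ, (2 * r + ν / k) / x * kBesselTerm k ν c r x) x := by
  have hs : x ∈ Set.Ioo (x / 2) (2 * x) := ⟨by linarith, by linarith⟩
  exact hasDerivAt_tsum_of_isPreconnected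
    ((summable_succ_mul_abs_kBesselTerm c hk hν (by positivity : 0 < 2 * x)).mul_left
      ((2 + ν / k) / (x / 2)))
    isOpen_Ioo isPreconnected_Ioo
    (fun r y hy ↦ hasDerivAt_kBesselTerm k ν c r (by linarith [hy.1]))
    (fun r y hy ↦ abs_kBesselTerm_deriv_le c hk hν r (by positivity) hy.1.le hy.2.le)
    hs (summable_kBesselTerm c hk hν hx) hs

theorem hasDerivAt_kBesselW {k ν : ℝ} (c : ℝ) (hk : 0 < k) (hν : 0 < ν) {x : ℝ} (hx : 0 < x) :
    HasDerivAt (kBesselW k ν c) ((kBesselW k (ν - k) c x - ν / x * kBesselW k ν c x) / k) x := by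
  convert hasDerivAt_kBesselW_tsum c hk hν.le hx using 1
  have hderiv : Summable (fun r : ℕ ↦ (2 * r + ν / k) / x * kBesselTerm k ν c r x) :=
    .of_norm_bounded ((summable_succ_mul_abs_kBesselTerm c hk hν.le hx).mul_left ((2 + ν / k) / x))
      fun r ↦ abs_kBesselTerm_deriv_le c hk hν.le r hx le_rfl le_rfl
  have hterm (r : ℕ) : kBesselTerm k (ν - k) c r x =
      k * ((2 * r + ν / k) / x * kBesselTerm k ν c r x) + ν / x * kBesselTerm k ν c r x := by
    have hshift := half_mul_kBesselTerm_sub_k c hk.ne' (by positivity : r * k + ν ≠ 0) hx.ne'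
    field_simp
    linear_combination 2 * hshift
  have hsplit : kBesselW k (ν - k) c x =
      k * ∑' r : ℕ, (2 * r + ν / k) / x * kBesselTerm k ν c r x + ν / x * kBesselW k ν c x := by
    rw [kBesselW_eq_tsum, kBesselW_eq_tsum, tsum_congr hterm,
      (hderiv.mul_left k).tsum_add ((summable_kBesselTerm c hk hν.le hx).mul_left _),
      tsum_mul_left, tsum_mul_left]
  rw [hsplit]
  field_simp
  ring

theorem kBessel_recurrence_two (k ν c : ℝ) (hk : 0 < k) (hν : 0 < ν) (x : ℝ) (hx : 0 < x) :
    x * deriv (kBesselW k ν c) x =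
      x / k * kBesselW k (ν - k) c x - ν / k * kBesselW k ν c x := by
  rw [(hasDerivAt_kBesselW c hk hν hx).deriv]
  field_simp
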